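/- Fix ϵ > 0, g > 1, and γ̃ > 0. Let A ∈ C²(ℝ,ℝ) and B ∈ C¹(ℝ,ℝ) with J := J_{ϵ,g}(A,B) < ∞, and let Ĩ ⊂ ℝ be a bounded interval such that (1/4)(A(x)² + B(x)² − 1)² ≥ γ̃ for all x ∈ Ĩ. Then the length of Ĩ satisfies |Ĩ| ≤ J/γ̃, and for all x₁, x₂ ∈ Ĩ one has |B(x₁) − B(x₂)| ≤ |Ĩ|^{1/2}(2J)^{1/2} ≤ 2^{1/2} γ̃^{−1/2} J. -/

import Mathlib

open Filter MeasureTheory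
open scoped ENNReal

/-- `P(a,b) = (1/4)(a²+b²−1)² + (1/2)(g−1)a²b²`. -/
noncomputable def Pfun (g a b : ℝ) : ℝ :=
  (1/4) * (a ^ 2 + b ^ 2 - 1) ^ 2 + (1/2) * (g - 1) * a ^ 2 * b ^ 2

/-- The functional `J_{ϵ,g}(A,B) = ∫_ℝ (ϵ/2)A''² + (1/2)B'² + P(A,B) ∈ [0,∞]`. -/
noncomputable def Jfun (ϵ g : ℝ) (A B : ℝ → ℝ) : ℝ≥0∞ :=
  ∫⁻ x : ℝ, ENNReal.ofReal ((ϵ/2) * (iteratedDeriv 2 A x) ^ 2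
    + (1/2) * (deriv B x) ^ 2 + Pfun g (A x) (B x))

lemma aux_opt (L K D : ℝ) (hL : 0 ≤ L) (hK : 0 ≤ K)
    (h : ∀ t : ℝ, 0 < t → D ≤ (t/2)*L + K/(2*t)) :
    D ≤ Real.sqrt L * Real.sqrt K := by
  rcases eq_or_lt_of_le hL with hL0 | hLpos
  · have hD : D ≤ 0 := by
      by_contra hD; push_neg at hD
      have ht : (0:ℝ) < (K+1)/D := by positivity
      have h2 := h _ ht
      rw [← hL0] at h2
      have he : (K+1)/D/2*0 + K/(2*((K+1)/D)) = K*D/(2*(K+1)) := by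
        field_simp; ring
      rw [he] at h2
      have h3 := (le_div_iff₀ (by positivity : (0:ℝ) < 2*(K+1))).mp h2
      nlinarith
    nlinarith [mul_nonneg (Real.sqrt_nonneg L) (Real.sqrt_nonneg K)]
  · rcases eq_or_lt_of_le hK with hK0 | hKpos
    · have hD : D ≤ 0 := by
        by_contra hD; push_neg at hD
        have ht : (0:ℝ) < D/L := by positivity
        have h2 := h _ ht
        rw [← hK0] at h2
        have he : (D/L/2)*L + 0/(2*(D/L)) = D/2 := by field_simp; ring
        rw [he] at h2
        linarith
      nlinarith [mul_nonneg (Real.sqrt_nonneg L) (Real.sqrt_nonneg K)]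
    · have hsL : 0 < Real.sqrt L := Real.sqrt_pos.2 hLpos
      have hsK : 0 < Real.sqrt K := Real.sqrt_pos.2 hKpos
      have hL2 : Real.sqrt L ^ 2 = L := Real.sq_sqrt hL
      have hK2 : Real.sqrt K ^ 2 = K := Real.sq_sqrt hK
      have h2 := h (Real.sqrt K / Real.sqrt L) (by positivity)
      have heq : (Real.sqrt K / Real.sqrt L / 2) * L + K/(2*(Real.sqrt K / Real.sqrt L))
          = Real.sqrt L * Real.sqrt K := by
        field_simp
        linear_combination (-K)*hL2 + (L - 2*Real.sqrt L^2)*hK2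
      linarith [heq ▸ h2]

/-- If `J := J_{ϵ,g}(A,B) < ∞` and `Ĩ` is a bounded interval
on which `(1/4)(A²+B²−1)² ≥ γ̃`, then `|Ĩ| ≤ J/γ̃` and for `x₁, x₂ ∈ Ĩ`,
`|B(x₁) − B(x₂)| ≤ |Ĩ|^{1/2}(2J)^{1/2} ≤ 2^{1/2}γ̃^{−1/2}J`. -/
theorem oscillation_on_bad_interval (ϵ g γ' : ℝ) (hϵ : 0 < ϵ) (hg : 1 < g)
    (hγ : 0 < γ') (A B : ℝ → ℝ) (hA : ContDiff ℝ 2 A) (hB : ContDiff ℝ 1 B)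
    (hJ : Jfun ϵ g A B ≠ ⊤)
    (I : Set ℝ) (hIint : I.OrdConnected) (hIbdd : Bornology.IsBounded I)
    (hIlow : ∀ x ∈ I, γ' ≤ (1/4) * ((A x) ^ 2 + (B x) ^ 2 - 1) ^ 2) :
    volume I ≤ ENNReal.ofReal ((Jfun ϵ g A B).toReal / γ') ∧
    ∀ x₁ ∈ I, ∀ x₂ ∈ I,
      |B x₁ - B x₂|
        ≤ Real.sqrt (volume I).toReal * Real.sqrt (2 * (Jfun ϵ g A B).toReal) ∧
      Real.sqrt (volume I).toReal * Real.sqrt (2 * (Jfun ϵ g A B).toReal)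
        ≤ Real.sqrt 2 * γ' ^ (-(1 : ℝ)/2) * (Jfun ϵ g A B).toReal := by
  set f : ℝ → ℝ := fun x => (ϵ/2) * (iteratedDeriv 2 A x) ^ 2
    + (1/2) * (deriv B x) ^ 2 + Pfun g (A x) (B x) with hfdef
  have hJfun : Jfun ϵ g A B = ∫⁻ x, ENNReal.ofReal (f x) := rfl
  set J := (Jfun ϵ g A B).toReal with hJdef
  have hJ0 : 0 ≤ J := ENNReal.toReal_nonneg
  -- continuity
  have hA'' : Continuous (iteratedDeriv 2 A) := hA.continuous_iteratedDeriv 2 le_rfl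
  have hAc : Continuous A := hA.continuous
  have hBc : Continuous B := hB.continuous
  have hB' : Continuous (deriv B) := hB.continuous_deriv le_rfl
  have hPc : Continuous (fun x => Pfun g (A x) (B x)) := by
    unfold Pfun; fun_prop
  have hfc : Continuous f := by
    apply Continuous.add; apply Continuous.add
    · fun_prop
    · fun_prop
    · exact hPc
  have hPnn : ∀ x : ℝ, 0 ≤ Pfun g (A x) (B x) := by
    intro x; unfold Pfun
    have h1 : 0 ≤ (A x ^ 2 + B x ^ 2 - 1) ^ 2 := sq_nonneg _
    have h2 : 0 ≤ (g - 1) * (A x) ^ 2 * (B x) ^ 2 :=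
      mul_nonneg (mul_nonneg (by linarith) (sq_nonneg _)) (sq_nonneg _)
    nlinarith
  have hquarter : ∀ x : ℝ, (1/4) * ((A x) ^ 2 + (B x) ^ 2 - 1) ^ 2 ≤ f x := by
    intro x
    have h2 : 0 ≤ (g - 1) * (A x) ^ 2 * (B x) ^ 2 :=
      mul_nonneg (mul_nonneg (by linarith) (sq_nonneg _)) (sq_nonneg _)
    have h3 : 0 ≤ (ϵ/2) * (iteratedDeriv 2 A x) ^ 2 := by positivity
    have h4 : 0 ≤ (1/2) * (deriv B x) ^ 2 := by positivity
    simp only [hfdef]; unfold Pfun; nlinarith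
  have hf0 : ∀ x, 0 ≤ f x := by
    intro x
    have := hPnn x
    have h3 : 0 ≤ (ϵ/2) * (iteratedDeriv 2 A x) ^ 2 := by positivity
    have h4 : 0 ≤ (1/2) * (deriv B x) ^ 2 := by positivity
    simp only [hfdef]; linarith
  -- Part 1: measure bound
  have hkey : ENNReal.ofReal γ' * volume I ≤ Jfun ϵ g A B := by
    calc ENNReal.ofReal γ' * volume I = ∫⁻ _ in I, ENNReal.ofReal γ' := (setLIntegral_const I _).symm
      _ ≤ ∫⁻ x in I, ENNReal.ofReal (f x) := by
          refine setLIntegral_mono (hfc.measurable.ennreal_ofReal) fun x hx => ?_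
          exact ENNReal.ofReal_le_ofReal ((hIlow x hx).trans (hquarter x))
      _ ≤ ∫⁻ x, ENNReal.ofReal (f x) := setLIntegral_le_lintegral _ _
      _ = Jfun ϵ g A B := hJfun.symm
  have hvol : volume I ≤ ENNReal.ofReal (J / γ') := by
    have h1 : volume I ≤ Jfun ϵ g A B / ENNReal.ofReal γ' := by
      rw [ENNReal.le_div_iff_mul_le (Or.inl (by simp [hγ, hγ.le])) (Or.inl ENNReal.ofReal_ne_top)]
      rw [mul_comm]; exact hkey
    rwa [ENNReal.ofReal_div_of_pos hγ, hJdef, ENNReal.ofReal_toReal hJ]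
  refine ⟨hvol, ?_⟩
  -- setup for part 2
  have hIfin : volume I ≠ ⊤ := hIbdd.measure_lt_top.ne
  set L := (volume I).toReal with hLdef
  have hL0 : 0 ≤ L := ENNReal.toReal_nonneg
  have hLle : L ≤ J / γ' := by
    have := ENNReal.toReal_mono ENNReal.ofReal_ne_top hvol
    rwa [ENNReal.toReal_ofReal (by positivity)] at this
  -- bound on ∫ B'^2
  have h2le : ∀ x₁ x₂ : ℝ, x₁ ≤ x₂ → ∫ x in x₁..x₂, (deriv B x)^2 ≤ 2*J := by
    intro x₁ x₂ h12
    have hint : IntegrableOn (fun x => (deriv B x)^2) (Set.Ioc x₁ x₂) :=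
      (hB'.pow 2).integrableOn_Ioc
    have hkey2 : ENNReal.ofReal (∫ x in Set.Ioc x₁ x₂, (deriv B x)^2) ≤ 2 * Jfun ϵ g A B := by
      rw [ofReal_integral_eq_lintegral_ofReal hint (ae_of_all _ fun x => sq_nonneg _)]
      calc ∫⁻ x in Set.Ioc x₁ x₂, ENNReal.ofReal ((deriv B x)^2)
          ≤ ∫⁻ x in Set.Ioc x₁ x₂, ENNReal.ofReal (2 * f x) := by
            refine setLIntegral_mono ((continuous_const.mul hfc).measurable.ennreal_ofReal)
              fun x _ => ENNReal.ofReal_le_ofReal ?_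
            have h3 : 0 ≤ (ϵ/2) * (iteratedDeriv 2 A x) ^ 2 := by positivity
            have := hPnn x
            simp only [hfdef]; nlinarith
        _ ≤ ∫⁻ x, ENNReal.ofReal (2 * f x) := setLIntegral_le_lintegral _ _
        _ = 2 * Jfun ϵ g A B := by
            rw [hJfun]
            simp_rw [ENNReal.ofReal_mul (by norm_num : (0:ℝ) ≤ 2)]
            rw [lintegral_const_mul _ hfc.measurable.ennreal_ofReal]
            norm_num
    have h2top : (2 : ℝ≥0∞) * Jfun ϵ g A B ≠ ⊤ := ENNReal.mul_ne_top (by simp) hJ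
    have := ENNReal.toReal_mono h2top hkey2
    rw [ENNReal.toReal_ofReal (setIntegral_nonneg measurableSet_Ioc fun x _ => sq_nonneg _),
      ENNReal.toReal_mul] at this
    rw [intervalIntegral.integral_of_le h12]
    simpa using this
  have hKnn : (0:ℝ) ≤ 2*J := by positivity
  -- main oscillation bound for ordered pair
  have hosc : ∀ x₁ ∈ I, ∀ x₂ ∈ I, x₁ ≤ x₂ →
      |B x₂ - B x₁| ≤ Real.sqrt L * Real.sqrt (2*J) := by
    intro x₁ h₁ x₂ h₂ h12
    refine aux_opt L (2*J) _ hL0 hKnn fun t ht => ?_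
    have hlen : x₂ - x₁ ≤ L := by
      have hm : volume (Set.Icc x₁ x₂) ≤ volume I := measure_mono (hIint.out h₁ h₂)
      have := ENNReal.toReal_mono hIfin hm
      rwa [Real.volume_Icc, ENNReal.toReal_ofReal (by linarith)] at this
    have hFTC : ∫ x in x₁..x₂, deriv B x = B x₂ - B x₁ :=
      intervalIntegral.integral_deriv_eq_sub
        (fun x _ => (hB.differentiable one_ne_zero).differentiableAt)
        (hB'.intervalIntegrable _ _)
    have habs : |B x₂ - B x₁| ≤ ∫ x in x₁..x₂, |deriv B x| := by
      rw [← hFTC]; exact intervalIntegral.abs_integral_le_integral_abs h12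
    have hptwise : ∀ x ∈ Set.Icc x₁ x₂, |deriv B x| ≤ t/2 + (deriv B x)^2/(2*t) := by
      intro x _
      have h1 : 0 ≤ (t - |deriv B x|)^2 := sq_nonneg _
      have h2 : |deriv B x|^2 = (deriv B x)^2 := sq_abs _
      have hkey3 : t/2 + |deriv B x|^2/(2*t) - |deriv B x| = (t - |deriv B x|)^2 / (2*t) := by
        field_simp; ring
      have h4 : 0 ≤ (t - |deriv B x|)^2 / (2*t) := by positivity
      rw [← h2]; linarith
    have hmono : (∫ x in x₁..x₂, |deriv B x|) ≤ ∫ x in x₁..x₂, (t/2 + (deriv B x)^2/(2*t)) :=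
      intervalIntegral.integral_mono_on h12 (hB'.abs.intervalIntegrable _ _)
        ((continuous_const.add ((hB'.pow 2).div_const _)).intervalIntegrable _ _) hptwise
    have hsplit : (∫ x in x₁..x₂, (t/2 + (deriv B x)^2/(2*t)))
        = (x₂ - x₁) * (t/2) + (∫ x in x₁..x₂, (deriv B x)^2) / (2*t) := by
      rw [intervalIntegral.integral_add (f := fun _ => t/2) (g := fun x => (deriv B x)^2/(2*t)) (intervalIntegrable_const)
        (((hB'.pow 2).div_const _).intervalIntegrable _ _),
        intervalIntegral.integral_const, intervalIntegral.integral_div]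
      simp [smul_eq_mul]
    have hI2 := h2le x₁ x₂ h12
    have hstep : (∫ x in x₁..x₂, (deriv B x)^2) / (2*t) ≤ (2*J)/(2*t) := by
      gcongr
    calc |B x₂ - B x₁| ≤ _ := habs
      _ ≤ _ := hmono
      _ = (x₂ - x₁) * (t/2) + (∫ x in x₁..x₂, (deriv B x)^2) / (2*t) := hsplit
      _ ≤ (t/2)*L + (2*J)/(2*t) := by nlinarith [hstep, hlen, ht]
  -- the constant bound
  have hconst : Real.sqrt L * Real.sqrt (2*J)
      ≤ Real.sqrt 2 * γ' ^ (-(1 : ℝ)/2) * J := by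
    have h1 : Real.sqrt L ≤ Real.sqrt (J/γ') := Real.sqrt_le_sqrt hLle
    have h2 : Real.sqrt L * Real.sqrt (2*J) ≤ Real.sqrt (J/γ') * Real.sqrt (2*J) :=
      mul_le_mul_of_nonneg_right h1 (Real.sqrt_nonneg _)
    refine h2.trans_eq ?_
    have hγs : γ' ^ (-(1:ℝ)/2) = (Real.sqrt γ')⁻¹ := by
      rw [Real.sqrt_eq_rpow, ← Real.rpow_neg hγ.le]
      norm_num
    rw [hγs, ← Real.sqrt_mul (by positivity)]
    have hsγ : 0 < Real.sqrt γ' := Real.sqrt_pos.2 hγ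
    have hγ2 : Real.sqrt γ' ^ 2 = γ' := Real.sq_sqrt hγ.le
    have : J / γ' * (2*J) = (Real.sqrt 2 * (Real.sqrt γ')⁻¹ * J)^2 := by
      have h2' : Real.sqrt 2 ^ 2 = 2 := Real.sq_sqrt (by norm_num)
      rw [mul_pow, mul_pow, h2', inv_pow, hγ2]
      field_simp
    rw [this, Real.sqrt_sq (by positivity)]
  intro x₁ h₁ x₂ h₂
  refine ⟨?_, hconst⟩
  rcases le_total x₁ x₂ with h12 | h12
  · rw [abs_sub_comm]; exact hosc x₁ h₁ x₂ h₂ h12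
  · exact hosc x₂ h₂ x₁ h₁ h12
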